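/- Let T be a rooted label tree for m labels with nested label columns ẏ₁ ≤ ẏ₂ ≤ … ≤ ẏ_m coordinatewise in {0,1}ⁿ. Suppose an internal node v has two internal children v₁, v₂ with ‖ż_{v₁}‖₁ ≤ ‖ż_{v₂}‖₁. Moving v₁ to become a child of v₂ changes the total cost by −‖ż_v‖₁ + ‖ż_{v₂}‖₁ ≤ 0 (where ż labels denote ORs of leaf vectors below and the cost of a node is its Hamming weight times its degree). Hence there exists an optimal tree in which every node has at most one internal child. -/

import Mathlib

/-- A rooted tree with leaves labeled by `α`. -/
inductive RTree (α : Type) where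
  | leaf : α → RTree α
  | node : List (RTree α) → RTree α

namespace RTree

/-- The list of leaf labels of a tree. -/
def leaves {α : Type} : RTree α → List α
  | .leaf a => [a]
  | .node ts => (ts.attach.map (fun ⟨t, _⟩ => t.leaves)).flatten

/-- Depth of the tree: maximum number of edges on a root-to-leaf path. -/
def depth {α : Type} : RTree α → ℕ
  | .leaf _ => 0
  | .node ts => 1 + (ts.attach.map (fun ⟨t, _⟩ => t.depth)).foldr max 0

/-- Maximum degree (number of children) over all nodes. -/
def maxdeg {α : Type} : RTree α → ℕ
  | .leaf _ => 0
  | .node ts => max ts.length ((ts.attach.map (fun ⟨t, _⟩ => t.maxdeg)).foldr max 0)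

end RTree

/-- Hamming weight of a binary vector. -/
def hw {n : ℕ} (z : Fin n → Bool) : ℕ := (Finset.univ.filter (fun i => z i = true)).card

/-- Coordinatewise OR of a list of binary vectors. -/
def orv {n : ℕ} (ys : List (Fin n → Bool)) : Fin n → Bool := fun i => ys.any (fun y => y i)

/-- `∑_{v ∈ V(T)} ‖z_v‖₁ · deg(v)`, where `z_v` is the OR of the leaf labels below `v`
and `deg(v)` the number of children of `v` (0 for leaves). -/
def RTree.cost {n : ℕ} : RTree (Fin n → Bool) → ℕ
  | .leaf _ => 0
  | .node ts => hw (orv (RTree.leaves (.node ts))) * ts.length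
      + (ts.attach.map (fun ⟨t, _⟩ => t.cost)).sum

/-- Whether a tree is a single leaf. -/
def RTree.isLeaf {α : Type} : RTree α → Bool
  | .leaf _ => true
  | .node _ => false

/-- Every node of the tree has at most one internal (non-leaf) child. -/
def RTree.atMostOneInternalChild {α : Type} : RTree α → Prop
  | .leaf _ => True
  | .node ts => (ts.countP (fun c => !c.isLeaf)) ≤ 1 ∧ ∀ c ∈ ts, c.atMostOneInternalChild

/-!
For nested labels the OR of a set of leaf labels is its largest element, so the weight
`‖ż‖₁` of a union of subtrees is the largest of their weights. Hence an internal child `v₁`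
of `v` can be moved under a heavier internal sibling `v₂`: the parent loses an edge of
weight `‖ż_v‖₁`, `v₂` gains one of weight `‖ż_{v₂}‖₁ ≤ ‖ż_v‖₁`, and no weight changes. If
`v₂` already has an internal child, `v₁` is merged recursively into that child instead, so
the result again has at most one internal child per node. Normalising a cost-minimal tree
bottom-up in this way gives an optimal tree of the required shape.
-/

theorem isChain_setOf_mem_of_pairwise {α : Type*} {r : α → α → Prop} {l : List α}
    (h : l.Pairwise r) : IsChain r {y | y ∈ l} := by
  have : Std.Symm fun a b => r a b ∨ r b a := ⟨fun _ _ => Or.symm⟩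
  have hpw : l.Pairwise fun a b => r a b ∨ r b a := h.imp Or.inl
  exact fun a ha b hb hab => hpw.forall ha hb hab

theorem isChain_setOf_mem_of_subset {α : Type*} {r : α → α → Prop} {L L' : List α}
    (h : L' ⊆ L) (hL : IsChain r {y | y ∈ L}) : IsChain r {y | y ∈ L'} :=
  hL.mono fun _ hy => h hy

theorem List.exists_perm_cons_of_countP_eq_one {α : Type*} {p : α → Bool} {l : List α}
    (h : l.countP p = 1) : ∃ x rest, p x ∧ l.Perm (x :: rest) ∧ rest.countP p = 0 := by
  obtain ⟨x, hx, hpx⟩ := List.countP_pos_iff.1 (by omega : 0 < l.countP p)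
  obtain ⟨s, t, rfl⟩ := List.append_of_mem hx
  refine ⟨x, s ++ t, hpx, List.perm_middle, ?_⟩
  simp only [List.countP_append, List.countP_cons, hpx, if_true] at h ⊢
  omega

variable {n : ℕ}

theorem orv_nil : orv ([] : List (Fin n → Bool)) = ⊥ := by
  funext i; simp [orv]

theorem orv_cons (a : Fin n → Bool) (L : List (Fin n → Bool)) : orv (a :: L) = a ⊔ orv L := by
  funext i; simp [orv]

theorem orv_append (L₁ L₂ : List (Fin n → Bool)) : orv (L₁ ++ L₂) = orv L₁ ⊔ orv L₂ := by
  funext i; simp [orv]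

theorem orv_le_orv {L L' : List (Fin n → Bool)} (h : L ⊆ L') : orv L ≤ orv L' := by
  intro i
  simp only [orv, Bool.le_iff_imp, List.any_eq_true]
  exact fun ⟨y, hy, hyi⟩ => ⟨y, h hy, hyi⟩

theorem orv_perm {L L' : List (Fin n → Bool)} (h : L.Perm L') : orv L = orv L' :=
  le_antisymm (orv_le_orv h.subset) (orv_le_orv h.symm.subset)

theorem orv_mem_of_isChain {L : List (Fin n → Bool)} (hL : IsChain (· ≤ ·) {y | y ∈ L})
    (hne : L ≠ []) : orv L ∈ L := by
  induction L with
  | nil => exact absurd rfl hne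
  | cons a L ih =>
    rcases eq_or_ne L [] with rfl | hL'
    · simp [orv_cons, orv_nil]
    have hmem := ih (isChain_setOf_mem_of_subset (List.subset_cons_self a L) hL) hL'
    rw [orv_cons]
    rcases hL.total (List.mem_cons_self) (List.mem_cons_of_mem a hmem) with h | h
    · rw [sup_eq_right.2 h]; exact List.mem_cons_of_mem a hmem
    · rw [sup_eq_left.2 h]; exact List.mem_cons_self

theorem orv_le_total_of_isChain {L₁ L₂ : List (Fin n → Bool)}
    (h : IsChain (· ≤ ·) {y | y ∈ L₁ ++ L₂}) : orv L₁ ≤ orv L₂ ∨ orv L₂ ≤ orv L₁ := by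
  rcases eq_or_ne L₁ [] with rfl | h₁
  · exact Or.inl (orv_nil ▸ bot_le)
  rcases eq_or_ne L₂ [] with rfl | h₂
  · exact Or.inr (orv_nil ▸ bot_le)
  exact h.total
    (List.mem_append_left L₂ (orv_mem_of_isChain
      (isChain_setOf_mem_of_subset (List.subset_append_left L₁ L₂) h) h₁))
    (List.mem_append_right L₁ (orv_mem_of_isChain
      (isChain_setOf_mem_of_subset (List.subset_append_right L₁ L₂) h) h₂))

theorem hw_mono : Monotone (hw (n := n)) := fun _ _ h =>
  Finset.card_le_card (Finset.monotone_filter_right _ fun i _ => Bool.le_iff_imp.1 (h i))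

theorem hw_orv_append_of_isChain {L₁ L₂ : List (Fin n → Bool)}
    (h : IsChain (· ≤ ·) {y | y ∈ L₁ ++ L₂}) :
    hw (orv (L₁ ++ L₂)) = max (hw (orv L₁)) (hw (orv L₂)) := by
  rw [orv_append]
  rcases orv_le_total_of_isChain h with h | h
  · rw [sup_eq_right.2 h, max_eq_right (hw_mono h)]
  · rw [sup_eq_left.2 h, max_eq_left (hw_mono h)]

namespace RTree

@[simp] theorem leaves_leaf {α : Type} (a : α) : (leaf a).leaves = [a] := by
  simp [leaves]

@[simp] theorem leaves_node {α : Type} (ts : List (RTree α)) :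
    (node ts).leaves = (ts.map leaves).flatten := by
  simp [leaves]

theorem isLeaf_eq_false_iff {α : Type} {t : RTree α} : t.isLeaf = false ↔ ∃ ts, t = node ts := by
  cases t <;> simp [isLeaf]

@[simp] theorem isLeaf_node {α : Type} (ts : List (RTree α)) : (node ts).isLeaf = false := rfl

theorem atMostOneInternalChild_leaf {α : Type} (a : α) : (leaf a).atMostOneInternalChild := by
  simp [atMostOneInternalChild]

theorem atMostOneInternalChild_node_iff {α : Type} {ts : List (RTree α)} :
    (node ts).atMostOneInternalChild ↔
      ts.countP (!·.isLeaf) ≤ 1 ∧ ∀ c ∈ ts, c.atMostOneInternalChild := by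
  rw [atMostOneInternalChild]

variable {n : ℕ}

/-- The paper's `‖ż_t‖₁`. -/
def weight (t : RTree (Fin n → Bool)) : ℕ := hw (orv t.leaves)

theorem cost_node (ts : List (RTree (Fin n → Bool))) :
    (node ts).cost = (node ts).weight * ts.length + (ts.map cost).sum := by
  simp [cost, weight]

theorem weight_le_weight {s t : RTree (Fin n → Bool)} (h : s.leaves ⊆ t.leaves) :
    s.weight ≤ t.weight :=
  hw_mono (orv_le_orv h)

theorem weight_eq_of_perm {s t : RTree (Fin n → Bool)} (h : s.leaves.Perm t.leaves) :
    s.weight = t.weight := by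
  rw [weight, weight, orv_perm h]

theorem exists_merge (vs us : List (RTree (Fin n → Bool)))
    (hv : (node vs).atMostOneInternalChild) (hu : (node us).atMostOneInternalChild)
    (hchain : IsChain (· ≤ ·) {y | y ∈ (node vs).leaves ++ (node us).leaves}) :
    ∃ ws, (node ws).atMostOneInternalChild ∧
      (node ws).leaves.Perm ((node vs).leaves ++ (node us).leaves) ∧
      (node ws).cost ≤ (node vs).cost + (node us).cost + max (node vs).weight (node us).weight := by
  induction hN : sizeOf vs + sizeOf us using Nat.strong_induction_on generalizing vs us with
  | _ N ih =>
  wlog hle : (node vs).weight ≤ (node us).weight generalizing vs us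
  · obtain ⟨ws, hamo, hperm, hcost⟩ :=
      this us vs hu hv (isChain_setOf_mem_of_subset List.perm_append_comm.subset hchain)
        (by omega) (by omega)
    exact ⟨ws, hamo, hperm.trans List.perm_append_comm, by rw [max_comm]; omega⟩
  have hweight : ∀ t : RTree (Fin n → Bool),
      t.leaves.Perm ((node vs).leaves ++ (node us).leaves) → t.weight = (node us).weight := by
    intro t ht
    rw [weight, orv_perm ht, hw_orv_append_of_isChain hchain]
    exact max_eq_right hle
  rw [max_eq_right hle]
  obtain ⟨hcount, hchildren⟩ := atMostOneInternalChild_node_iff.1 hu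
  rcases Nat.le_one_iff_eq_zero_or_eq_one.1 hcount with hcount | hcount
  · refine ⟨node vs :: us, atMostOneInternalChild_node_iff.2 ⟨?_, ?_⟩, by simp, ?_⟩
    · simp [hcount]
    · simpa [hv] using hchildren
    · rw [cost_node, cost_node us, hweight _ (by simp)]
      simp only [List.length_cons, List.map_cons, List.sum_cons, mul_add_one]
      omega
  obtain ⟨d, rest, hd, hperm, hrest⟩ := List.exists_perm_cons_of_countP_eq_one hcount
  obtain ⟨ds, rfl⟩ := isLeaf_eq_false_iff.1 (by simpa using hd)
  have hds : node ds ∈ us := hperm.symm.subset List.mem_cons_self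
  have hdsub : (node ds).leaves ⊆ (node us).leaves := by
    intro y hy; simpa using ⟨_, hds, hy⟩
  have hsize := List.sizeOf_lt_of_mem hds
  have hsub : (node vs).leaves ++ (node ds).leaves ⊆ (node vs).leaves ++ (node us).leaves :=
    List.append_subset.2
      ⟨List.subset_append_left _ _, List.Subset.trans hdsub (List.subset_append_right _ _)⟩
  obtain ⟨es, hamo, hperm', hcost⟩ := ih _ (by simp at hsize; omega) vs ds hv (hchildren _ hds)
    (isChain_setOf_mem_of_subset hsub hchain) rfl
  have husperm : (node us).leaves.Perm ((node ds).leaves ++ (rest.map leaves).flatten) := by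
    simpa using (hperm.map leaves).flatten
  have hleaves : (node (node es :: rest)).leaves.Perm ((node vs).leaves ++ (node us).leaves) := by
    calc (node (node es :: rest)).leaves
        = (node es).leaves ++ (rest.map leaves).flatten := by simp
      List.Perm _ ((node vs).leaves ++ (node ds).leaves ++ (rest.map leaves).flatten) :=
        hperm'.append_right _
      List.Perm _ ((node vs).leaves ++ (node us).leaves) := by
        rw [List.append_assoc]; exact husperm.symm.append_left _
  refine ⟨node es :: rest, atMostOneInternalChild_node_iff.2 ⟨?_, ?_⟩, hleaves, ?_⟩
  · simp [hrest]
  · simpa [hamo] using fun c hc => hchildren c (hperm.symm.subset (List.mem_cons_of_mem _ hc))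
  · have hds_le : (node ds).weight ≤ (node us).weight := weight_le_weight hdsub
    have hlen : us.length = rest.length + 1 := by simpa using hperm.length_eq
    have hsum : (us.map cost).sum = (node ds).cost + (rest.map cost).sum := by
      simpa using (hperm.map cost).sum_eq
    rw [cost_node, cost_node us, hweight _ hleaves, hlen, hsum]
    simp only [List.length_cons, List.map_cons, List.sum_cons]
    have := max_le hle hds_le
    omega

-- `W` bounds the weight of the parent, so `W * l.length` is what the edges to `l` cost it.
theorem exists_merge_forest (l : List (RTree (Fin n → Bool)))
    (hl : ∀ c ∈ l, c.atMostOneInternalChild ∧ c.isLeaf = false)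
    (hchain : IsChain (· ≤ ·) {y | y ∈ (l.map leaves).flatten}) {W : ℕ}
    (hW : hw (orv (l.map leaves).flatten) ≤ W) :
    ∃ l' : List (RTree (Fin n → Bool)), l'.length ≤ 1 ∧
      (∀ c ∈ l', c.atMostOneInternalChild ∧ c.isLeaf = false) ∧
      (l'.map leaves).flatten.Perm (l.map leaves).flatten ∧
      (l'.map cost).sum + W * l'.length ≤ (l.map cost).sum + W * l.length := by
  induction l with
  | nil => exact ⟨[], by simp, by simp, by simp, by simp⟩
  | cons a l ih =>
    have hsub : (l.map leaves).flatten ⊆ ((a :: l).map leaves).flatten := by simp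
    obtain ⟨l', hlen, hl', hperm, hcost⟩ :=
      ih (fun c hc => hl c (List.mem_cons_of_mem a hc)) (isChain_setOf_mem_of_subset hsub hchain)
        ((hw_mono (orv_le_orv hsub)).trans hW)
    have ha : a.weight ≤ W := (hw_mono (orv_le_orv (by simp))).trans hW
    match l', hlen, hl', hperm, hcost with
    | [], _, _, hperm, hcost =>
      have hnil : (l.map leaves).flatten = [] := List.perm_nil.1 hperm.symm
      refine ⟨[a], by simp, by simpa using hl a List.mem_cons_self, by simp [hnil], ?_⟩
      simp only [List.map_cons, List.map_nil, List.sum_cons, List.sum_nil, List.length_cons,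
        List.length_nil, mul_add_one] at hcost ⊢
      omega
    | [u], _, hu, hperm, hcost =>
      obtain ⟨vs, rfl⟩ := isLeaf_eq_false_iff.1 (hl a List.mem_cons_self).2
      obtain ⟨us, rfl⟩ := isLeaf_eq_false_iff.1 (hu u List.mem_cons_self).2
      have hperm : (node us).leaves.Perm (l.map leaves).flatten := by simpa using hperm
      have hpair : (node vs).leaves ++ (node us).leaves ⊆ ((node vs :: l).map leaves).flatten :=
        List.append_subset.2 ⟨List.subset_append_left _ _,
          List.Subset.trans hperm.subset (List.subset_append_right _ _)⟩
      obtain ⟨ws, hamo, hperm', hcost'⟩ := exists_merge vs us (hl _ List.mem_cons_self).1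
        (hu _ List.mem_cons_self).1 (isChain_setOf_mem_of_subset hpair hchain)
      have hu_le : (node us).weight ≤ W :=
        (hw_mono (orv_le_orv (List.Subset.trans hperm.subset hsub))).trans hW
      refine ⟨[node ws], by simp, by simpa using hamo, ?_, ?_⟩
      · simpa using hperm'.trans (hperm.append_left _)
      · simp only [List.map_cons, List.map_nil, List.sum_cons, List.sum_nil, List.length_cons,
          List.length_nil, mul_add_one] at hcost ⊢
        have := max_le ha hu_le
        omega

theorem exists_atMostOneInternalChild_of_children (ts : List (RTree (Fin n → Bool)))
    (hts : ∀ c ∈ ts, c.atMostOneInternalChild)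
    (hchain : IsChain (· ≤ ·) {y | y ∈ (node ts).leaves}) :
    ∃ ts', (node ts').atMostOneInternalChild ∧ (node ts').leaves.Perm (node ts).leaves ∧
      (node ts').cost ≤ (node ts).cost := by
  set lvs := ts.filter (·.isLeaf)
  set ints := ts.filter (!·.isLeaf)
  have hsplit : (lvs ++ ints).Perm ts := List.filter_append_perm _ _
  have hsub : (ints.map leaves).flatten ⊆ (node ts).leaves := by
    intro y hy
    simp only [List.mem_flatten, List.mem_map, leaves_node] at hy ⊢
    obtain ⟨_, ⟨c, hc, rfl⟩, hy⟩ := hy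
    exact ⟨_, ⟨c, List.mem_of_mem_filter hc, rfl⟩, hy⟩
  obtain ⟨l', hlen, hl', hperm, hcost⟩ := exists_merge_forest ints
    (fun c hc => ⟨hts c (List.mem_of_mem_filter hc), by simpa using (List.mem_filter.1 hc).2⟩)
    (isChain_setOf_mem_of_subset hsub hchain) (W := (node ts).weight) (hw_mono (orv_le_orv hsub))
  have hleaves : (node (lvs ++ l')).leaves.Perm (node ts).leaves := by
    simpa using (hperm.append_left _).trans (by simpa using (hsplit.map leaves).flatten)
  refine ⟨lvs ++ l', atMostOneInternalChild_node_iff.2 ⟨?_, ?_⟩, hleaves, ?_⟩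
  · have hlvs : lvs.countP (!·.isLeaf) = 0 := by
      simp [lvs, List.countP_eq_zero]
    rw [List.countP_append, hlvs, zero_add]
    exact List.countP_le_length.trans hlen
  · intro c hc
    rcases List.mem_append.1 hc with hc | hc
    · exact hts c (List.mem_of_mem_filter hc)
    · exact (hl' c hc).1
  · have hlen_ts : lvs.length + ints.length = ts.length := by simpa using hsplit.length_eq
    have hsum_ts : (lvs.map cost).sum + (ints.map cost).sum = (ts.map cost).sum := by
      simpa using (hsplit.map cost).sum_eq
    rw [cost_node, cost_node, weight_eq_of_perm hleaves, ← hlen_ts, ← hsum_ts]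
    simp only [List.length_append, List.map_append, List.sum_append, mul_add]
    omega

theorem exists_replace_children {ts : List (RTree (Fin n → Bool))}
    (h : ∀ c ∈ ts, ∃ c' : RTree (Fin n → Bool), c'.leaves.Perm c.leaves ∧
      c'.atMostOneInternalChild ∧ c'.cost ≤ c.cost) :
    ∃ ts', (∀ c ∈ ts', c.atMostOneInternalChild) ∧ (node ts').leaves.Perm (node ts).leaves ∧
      (node ts').cost ≤ (node ts).cost := by
  suffices ∃ ts' : List (RTree (Fin n → Bool)), (∀ c ∈ ts', c.atMostOneInternalChild) ∧
      ts'.length = ts.length ∧ (ts'.map leaves).flatten.Perm (ts.map leaves).flatten ∧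
      (ts'.map cost).sum ≤ (ts.map cost).sum by
    obtain ⟨ts', hamo, hlen, hperm, hcost⟩ := this
    have hleaves : (node ts').leaves.Perm (node ts).leaves := by simpa using hperm
    refine ⟨ts', hamo, hleaves, ?_⟩
    rw [cost_node, cost_node, weight_eq_of_perm hleaves, hlen]
    omega
  induction ts with
  | nil => exact ⟨[], by simp, rfl, by simp, le_rfl⟩
  | cons c ts ih =>
    obtain ⟨c', hperm, hamo, hcost⟩ := h c List.mem_cons_self
    obtain ⟨ts', hamo', hlen, hperm', hcost'⟩ := ih fun d hd => h d (List.mem_cons_of_mem c hd)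
    refine ⟨c' :: ts', ?_, by simp [hlen], by simpa using hperm.append hperm', ?_⟩
    · simpa [hamo] using hamo'
    · simp only [List.map_cons, List.sum_cons]
      omega

theorem exists_atMostOneInternalChild_cost_le :
    ∀ t : RTree (Fin n → Bool), IsChain (· ≤ ·) {y | y ∈ t.leaves} →
      ∃ t' : RTree (Fin n → Bool), t'.leaves.Perm t.leaves ∧ t'.atMostOneInternalChild ∧
        t'.cost ≤ t.cost
  | leaf a, _ => ⟨leaf a, List.Perm.refl _, atMostOneInternalChild_leaf a, le_rfl⟩
  | node ts, hchain => by
    have hchildren : ∀ c ∈ ts, ∃ c' : RTree (Fin n → Bool), c'.leaves.Perm c.leaves ∧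
        c'.atMostOneInternalChild ∧ c'.cost ≤ c.cost := fun c hc =>
      exists_atMostOneInternalChild_cost_le c (isChain_setOf_mem_of_subset
        (fun y hy => by simpa using ⟨c, hc, hy⟩) hchain)
    obtain ⟨ts', hamo, hperm, hcost⟩ := exists_replace_children hchildren
    obtain ⟨ts'', hamo', hperm', hcost'⟩ := exists_atMostOneInternalChild_of_children ts' hamo
      (isChain_setOf_mem_of_subset hperm.subset hchain)
    exact ⟨node ts'', hperm'.trans hperm, hamo', hcost'.trans hcost⟩

end RTree

theorem stmt_15_general (n : ℕ) (ys : List (Fin n → Bool))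
    (hnested : List.Pairwise (fun a b : Fin n → Bool => ∀ i, a i = true → b i = true) ys) :
    ∃ topt : RTree (Fin n → Bool), topt.leaves.Perm ys ∧
      topt.atMostOneInternalChild ∧
      ∀ t : RTree (Fin n → Bool), t.leaves.Perm ys → topt.cost ≤ t.cost := by
  have hchain : IsChain (· ≤ ·) {y | y ∈ ys} :=
    isChain_setOf_mem_of_pairwise (hnested.imp fun h i => Bool.le_iff_imp.2 (h i))
  obtain ⟨t₀, ht₀, hmin⟩ := (InvImage.wf RTree.cost wellFounded_lt).has_min
    {t | t.leaves.Perm ys} ⟨.node (ys.map .leaf), by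
      simp [Function.comp_def, ← List.flatMap_def]⟩
  obtain ⟨t, hperm, hamo, hcost⟩ :=
    RTree.exists_atMostOneInternalChild_cost_le t₀ (isChain_setOf_mem_of_subset ht₀.subset hchain)
  exact ⟨t, hperm.trans ht₀, hamo, fun s hs => hcost.trans (not_lt.1 (hmin s hs))⟩

/-- Nested (Matryoshka) multi-label case: if the leaf-label columns are nested,
`ẏ₁ ≤ ẏ₂ ≤ … ≤ ẏ_m` coordinatewise, then there exists a cost-optimal tree in which
every node has at most one internal child. -/
theorem stmt_15 (n : ℕ) (ys : List (Fin n → Bool)) (hne : ys ≠ [])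
    (hnested : List.Pairwise (fun a b : Fin n → Bool => ∀ i, a i = true → b i = true) ys) :
    ∃ topt : RTree (Fin n → Bool), topt.leaves.Perm ys ∧
      topt.atMostOneInternalChild ∧
      ∀ t : RTree (Fin n → Bool), t.leaves.Perm ys → topt.cost ≤ t.cost :=
  stmt_15_general n ys hnested
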